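/- Let m₁ and m_P be positive integers (or m_P > 0 real), λ > 0, Ψ > 0, C > 0, z > 0, α₂ > 0, μ₂ > 0 and Ῡ > 0. Let γ₁, P and Υ be mutually independent random variables, where γ₁ has the Gamma(m₁, λ) density, P has the Gamma(m_P, Ψ) density with density f_P, and Υ has the α-μ density with parameters (α₂, μ₂, Ῡ), with density f_Υ. Then, with γ₂ = P·Υ, P( γ₁γ₂/(γ₂ + C) ≤ z ) = 1 − e^{−λz} · Σ_{n=0}^{m₁−1} (1/n!) Σ_{p=0}^{n} C(n,p) (λz)^{n−p} (λCz)^{p} ∫_0^∞ ∫_0^∞ (t u)^{−p} e^{−λCz/(t u)} f_P(t) f_Υ(u) dt du, where C(n,p) denotes the binomial coefficient. -/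

import Mathlib

/-!
Condition on `X = P Υ`, which is independent of `γ₁` and almost surely positive. For `x > 0`,
`γ₁ x / (x + C) ≤ z` iff `γ₁ ≤ z + C z / x`, so the probability is `𝔼[F(z + C z / X)]`, where
`F(a) = 1 - e^{-λ a} ∑_{n < m₁} (λ a)^n / n!` is the Erlang distribution function of `γ₁`.
Expanding `(λ z + λ C z / X)^n` binomially turns this into a finite combination of the moments
`𝔼[X^{-p} e^{-λ C z / X}]`, and by independence of `P` and `Υ` each of them is a double integral
against their densities. The bound `x^{-p} e^{-c/x} ≤ p! / c^p` makes all these integrands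
integrable.
-/

open MeasureTheory ProbabilityTheory Finset Real
open scoped Nat

theorem hasDerivAt_exp_mul_sum_pow_div_factorial (l : ℝ) (k : ℕ) (x : ℝ) :
    HasDerivAt (fun y => exp (-l * y) * ∑ n ∈ range (k + 1), (l * y) ^ n / n !)
      (-(l ^ (k + 1) * x ^ k * exp (-l * x) / k !)) x := by
  have hexp : HasDerivAt (fun y => exp (-l * y)) (exp (-l * x) * -l) x := by
    simpa using ((hasDerivAt_id x).const_mul (-l)).exp
  induction k with
  | zero => simpa [mul_comm] using hexp
  | succ k ih =>
    have hpow : HasDerivAt (fun y => (l * y) ^ (k + 1) / (k + 1)!)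
        ((k + 1) * (l * x) ^ k * l / (k + 1)!) x := by
      simpa using (((hasDerivAt_id x).const_mul l).pow (k + 1)).div_const ((k + 1)! : ℝ)
    have h := ih.fun_add (hexp.fun_mul hpow)
    simp only [← mul_add, ← sum_range_succ (fun n => (l * _) ^ n / n !)] at h
    refine h.congr_deriv ?_
    rw [Nat.factorial_succ]
    push_cast
    field_simp
    ring

theorem integral_erlang_density (l : ℝ) (k : ℕ) (a : ℝ) :
    ∫ x in 0..a, l ^ (k + 1) * x ^ k * exp (-l * x) / k !
      = 1 - exp (-l * a) * ∑ n ∈ range (k + 1), (l * a) ^ n / n ! := by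
  have hderiv (x : ℝ) :
      HasDerivAt (fun y => -(exp (-l * y) * ∑ n ∈ range (k + 1), (l * y) ^ n / n !))
        (l ^ (k + 1) * x ^ k * exp (-l * x) / k !) x := by
    simpa using (hasDerivAt_exp_mul_sum_pow_div_factorial l k x).fun_neg
  rw [intervalIntegral.integral_eq_sub_of_hasDerivAt (fun x _ => hderiv x)
    ((by fun_prop : Continuous _).intervalIntegrable _ _)]
  simp [sum_range_succ']
  ring

section WithDensity

variable {α : Type*} [MeasurableSpace α] {μ : Measure α} {f : α → ℝ}

theorem integral_withDensity_ofReal (hfm : Measurable f) (hf : ∀ x, 0 ≤ f x) (g : α → ℝ) :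
    ∫ x, g x ∂μ.withDensity (fun x => ENNReal.ofReal (f x)) = ∫ x, g x * f x ∂μ := by
  rw [integral_withDensity_eq_integral_toReal_smul hfm.ennreal_ofReal
    (ae_of_all _ fun _ => ENNReal.ofReal_lt_top)]
  simp only [ENNReal.toReal_ofReal (hf _), smul_eq_mul, mul_comm]

theorem measureReal_withDensity_ofReal (hfm : Measurable f) (hf : ∀ x, 0 ≤ f x) {s : Set α}
    (hs : MeasurableSet s) :
    (μ.withDensity fun x => ENNReal.ofReal (f x)).real s = ∫ x in s, f x ∂μ := by
  rw [← integral_indicator_one hs, integral_withDensity_ofReal hfm hf, ← integral_indicator hs]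
  congr 1 with x
  by_cases hx : x ∈ s <;> simp [hx]

theorem ae_withDensity_ofReal_pos (hfm : Measurable f) :
    ∀ᵐ x ∂μ.withDensity (fun x => ENNReal.ofReal (f x)), 0 < f x :=
  (ae_withDensity_iff hfm.ennreal_ofReal).2 <|
    ae_of_all _ fun _ h => ENNReal.ofReal_pos.1 (pos_iff_ne_zero.2 h)

end WithDensity

structure IsDensityOnIoi (f : ℝ → ℝ) : Prop where
  measurable : Measurable f
  nonneg : ∀ x, 0 ≤ f x
  eq_zero_of_nonpos : ∀ x ≤ 0, f x = 0

namespace IsDensityOnIoi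

variable {f : ℝ → ℝ}

theorem of_eq_ite {g : ℝ → ℝ} (hf : ∀ x, f x = if 0 < x then g x else 0) (hg : Measurable g)
    (hg_nonneg : ∀ x, 0 < x → 0 ≤ g x) : IsDensityOnIoi f where
  measurable := funext hf ▸ Measurable.ite measurableSet_Ioi hg measurable_const
  nonneg x := by
    rw [hf]
    split_ifs with hx
    exacts [hg_nonneg x hx, le_rfl]
  eq_zero_of_nonpos x hx := by rw [hf, if_neg hx.not_gt]

theorem integral_withDensity (hf : IsDensityOnIoi f) (g : ℝ → ℝ) :
    ∫ x, g x ∂volume.withDensity (fun x => ENNReal.ofReal (f x))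
      = ∫ x in Set.Ioi 0, g x * f x := by
  rw [integral_withDensity_ofReal hf.measurable hf.nonneg,
    setIntegral_eq_integral_of_forall_compl_eq_zero]
  intro x hx
  rw [hf.eq_zero_of_nonpos x (not_lt.1 hx), mul_zero]

theorem ae_pos_of_map_eq {Ω : Type*} [MeasurableSpace Ω] {μ : Measure Ω} {X : Ω → ℝ}
    (hf : IsDensityOnIoi f) (hX : Measurable X)
    (hX_law : μ.map X = volume.withDensity fun x => ENNReal.ofReal (f x)) :
    ∀ᵐ ω ∂μ, 0 < X ω := by
  filter_upwards [ae_of_ae_map hX.aemeasurable (hX_law ▸ ae_withDensity_ofReal_pos hf.measurable)]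
    with ω hω
  by_contra! h
  exact hω.ne' (hf.eq_zero_of_nonpos _ h)

end IsDensityOnIoi

theorem gamma_measureReal_Iic {l : ℝ} (hl : 0 ≤ l) {m : ℕ} (hm : 0 < m) {a : ℝ} (ha : 0 ≤ a) :
    (volume.withDensity fun x => ENNReal.ofReal
        (if 0 < x then l ^ m * x ^ (m - 1) * exp (-l * x) / Gamma m else 0)).real (Set.Iic a)
      = 1 - exp (-l * a) * ∑ n ∈ range m, (l * a) ^ n / n ! := by
  obtain ⟨k, rfl⟩ : ∃ k, m = k + 1 := ⟨m - 1, (Nat.succ_pred_eq_of_pos hm).symm⟩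
  have hdens : IsDensityOnIoi fun x =>
      if 0 < x then l ^ (k + 1) * x ^ (k + 1 - 1) * exp (-l * x) / Gamma (k + 1 : ℕ) else 0 :=
    .of_eq_ite (fun _ => rfl) (by fun_prop) fun x hx => by positivity
  rw [measureReal_withDensity_ofReal hdens.measurable hdens.nonneg measurableSet_Iic,
    setIntegral_eq_of_subset_of_forall_sdiff_eq_zero measurableSet_Iic Set.Ioc_subset_Iic_self
      fun x hx => hdens.eq_zero_of_nonpos x (not_lt.1 fun h => hx.2 ⟨h, hx.1⟩),
    setIntegral_congr_fun measurableSet_Ioc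
      (g := fun x => l ^ (k + 1) * x ^ k * exp (-l * x) / k !) fun x hx => ?_,
    ← intervalIntegral.integral_of_le ha, integral_erlang_density]
  rw [if_pos hx.1, Nat.add_sub_cancel, Nat.cast_succ, Gamma_nat_eq_factorial]

theorem exp_mul_sum_pow_div_factorial_add_div (l c z : ℝ) (m : ℕ) {x : ℝ} (hx : 0 < x) :
    exp (-l * (z + c * z / x)) * ∑ n ∈ range m, (l * (z + c * z / x)) ^ n / n !
      = exp (-l * z) * ∑ n ∈ range m, 1 / (n ! : ℝ) * ∑ p ∈ range (n + 1),
          (n.choose p : ℝ) * (l * z) ^ (n - p) * (l * c * z) ^ p *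
            (x ^ (-(p : ℝ)) * exp (-(l * c * z) / x)) := by
  have hexp : exp (-l * (z + c * z / x)) = exp (-l * z) * exp (-(l * c * z) / x) := by
    rw [← exp_add]
    ring_nf
  have hbase : l * (z + c * z / x) = (l * c * z) * x⁻¹ + l * z := by ring
  simp only [hexp, hbase, add_pow, rpow_neg hx.le, rpow_natCast, mul_sum, sum_div]
  refine sum_congr rfl fun n _ => sum_congr rfl fun p _ => ?_
  ring

theorem rpow_neg_natCast_mul_exp_neg_div_le {c x : ℝ} (hc : 0 < c) (hx : 0 < x) (p : ℕ) :
    x ^ (-(p : ℝ)) * exp (-c / x) ≤ p ! / c ^ p := by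
  have h := pow_div_factorial_le_exp (x := c / x) (div_nonneg hc.le hx.le) p
  rw [rpow_neg hx.le, rpow_natCast, neg_div, exp_neg, ← mul_inv,
    inv_le_comm₀ (by positivity) (by positivity), inv_div]
  rw [div_pow, div_div, div_le_iff₀ (by positivity)] at h
  rw [div_le_iff₀ (by positivity)]
  linarith

theorem integrable_rpow_neg_natCast_mul_exp_neg_div {Ω : Type*} [MeasurableSpace Ω]
    {μ : Measure Ω} [IsFiniteMeasure μ] {X : Ω → ℝ} (hX : Measurable X)
    (hX_pos : ∀ᵐ ω ∂μ, 0 < X ω) {c : ℝ} (hc : 0 < c) (p : ℕ) :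
    Integrable (fun ω => X ω ^ (-(p : ℝ)) * exp (-c / X ω)) μ := by
  refine Integrable.of_bound (by fun_prop) (p ! / c ^ p) ?_
  filter_upwards [hX_pos] with ω hω
  rw [Real.norm_of_nonneg (by positivity)]
  exact rpow_neg_natCast_mul_exp_neg_div_le hc hω p

theorem mul_div_add_le_iff {x y z C : ℝ} (hx : 0 < x) (hC : 0 ≤ C) :
    y * x / (x + C) ≤ z ↔ y ≤ z + C * z / x := by
  rw [div_le_iff₀ (by positivity), show z + C * z / x = z * (x + C) / x by field_simp,
    le_div_iff₀ hx]

theorem integral_const_sub_mul_sum_mul_sum {Ω : Type*} [MeasurableSpace Ω] {μ : Measure Ω}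
    [IsProbabilityMeasure μ] {K : ℕ → Ω → ℝ} (hK : ∀ p, Integrable (K p) μ) (c d : ℝ)
    (a : ℕ → ℝ) (b : ℕ → ℕ → ℝ) (s : Finset ℕ) (t : ℕ → Finset ℕ) :
    ∫ ω, c - d * ∑ n ∈ s, a n * ∑ p ∈ t n, b n p * K p ω ∂μ
      = c - d * ∑ n ∈ s, a n * ∑ p ∈ t n, b n p * ∫ ω, K p ω ∂μ := by
  rw [integral_sub (integrable_const c) (by fun_prop), integral_const, probReal_univ, one_smul,
    integral_const_mul, integral_finsetSum _ fun n _ => by fun_prop]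
  refine congrArg _ (congrArg _ (sum_congr rfl fun n _ => ?_))
  rw [integral_const_mul, integral_finsetSum _ fun p _ => by fun_prop]
  simp only [integral_const_mul]

namespace ProbabilityTheory.IndepFun

variable {Ω : Type*} [MeasurableSpace Ω] {μ : Measure Ω} [IsFiniteMeasure μ]

theorem measureReal_preimage_eq_integral {α β : Type*} [MeasurableSpace α] [MeasurableSpace β]
    {X : Ω → α} {Y : Ω → β} (hX : Measurable X) (hY : Measurable Y) (hXY : IndepFun X Y μ)
    {S : Set (α × β)} (hS : MeasurableSet S) :
    μ.real {ω | (X ω, Y ω) ∈ S} = ∫ ω, (μ.map Y).real (Prod.mk (X ω) ⁻¹' S) ∂μ := by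
  have hslice : Measurable fun x => μ.map Y (Prod.mk x ⁻¹' S) :=
    measurable_measure_prodMk_left hS
  calc μ.real {ω | (X ω, Y ω) ∈ S} = ((μ.map X).prod (μ.map Y)).real S := by
        rw [← hXY.map_prod_eq_prod_map_map hX.aemeasurable hY.aemeasurable,
          map_measureReal_apply (hX.prodMk hY) hS]
        rfl
    _ = ∫ x, (μ.map Y).real (Prod.mk x ⁻¹' S) ∂μ.map X := by
        rw [measureReal_def, Measure.prod_apply hS,
          ← integral_toReal hslice.aemeasurable (ae_of_all _ fun _ => measure_lt_top _ _)]
        rfl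
    _ = ∫ ω, (μ.map Y).real (Prod.mk (X ω) ⁻¹' S) ∂μ :=
        integral_map hX.aemeasurable hslice.ennreal_toReal.aestronglyMeasurable

theorem measureReal_mul_div_add_le {X Y : Ω → ℝ} (hX : Measurable X) (hY : Measurable Y)
    (hXY : IndepFun X Y μ) (hX_pos : ∀ᵐ ω ∂μ, 0 < X ω) {C : ℝ} (hC : 0 ≤ C) (z : ℝ) :
    μ.real {ω | Y ω * X ω / (X ω + C) ≤ z}
      = ∫ ω, (μ.map Y).real (Set.Iic (z + C * z / X ω)) ∂μ := by
  refine (hXY.measureReal_preimage_eq_integral hX hY (S := {q | q.2 * q.1 / (q.1 + C) ≤ z})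
    (measurableSet_le (by fun_prop) measurable_const)).trans (integral_congr_ae ?_)
  filter_upwards [hX_pos] with ω hω
  congr 1 with y
  exact mul_div_add_le_iff hω hC

theorem integral_comp_mul_eq {P Υ : Ω → ℝ} (hP : Measurable P) (hΥ : Measurable Υ)
    (hPΥ : IndepFun P Υ μ) {fP fΥ : ℝ → ℝ} (hfP : IsDensityOnIoi fP)
    (hP_law : μ.map P = volume.withDensity fun t => ENNReal.ofReal (fP t))
    (hfΥ : IsDensityOnIoi fΥ)
    (hΥ_law : μ.map Υ = volume.withDensity fun u => ENNReal.ofReal (fΥ u))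
    {h : ℝ → ℝ} (hh : Measurable h) (hint : Integrable (fun ω => h (P ω * Υ ω)) μ) :
    ∫ ω, h (P ω * Υ ω) ∂μ = ∫ u in Set.Ioi 0, ∫ t in Set.Ioi 0, h (t * u) * fP t * fΥ u := by
  have hmul : Measurable fun q : ℝ × ℝ => h (q.1 * q.2) := hh.comp (by fun_prop)
  have hmap := hPΥ.map_prod_eq_prod_map_map hP.aemeasurable hΥ.aemeasurable
  have hint_prod : Integrable (fun q : ℝ × ℝ => h (q.1 * q.2)) ((μ.map P).prod (μ.map Υ)) := by
    rwa [← hmap, integrable_map_measure hmul.aestronglyMeasurable (hP.prodMk hΥ).aemeasurable]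
  calc ∫ ω, h (P ω * Υ ω) ∂μ = ∫ q, h (q.1 * q.2) ∂(μ.map P).prod (μ.map Υ) := by
        rw [← hmap, integral_map (hP.prodMk hΥ).aemeasurable hmul.aestronglyMeasurable]
    _ = ∫ u, ∫ t, h (t * u) ∂μ.map P ∂μ.map Υ := integral_prod_symm _ hint_prod
    _ = ∫ u in Set.Ioi 0, ∫ t in Set.Ioi 0, h (t * u) * fP t * fΥ u := by
        simp only [hP_law, hΥ_law, hfP.integral_withDensity, hfΥ.integral_withDensity,
          integral_mul_const]

end ProbabilityTheory.IndepFun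

/-- Exact CDF of the end-to-end SNR `γ₁ γ₂ / (γ₂ + C)` with `γ₂ = P ⬝ Υ`,
where `γ₁`, `P`, `Υ` are mutually independent, `γ₁` is `Gamma (m₁, lam)` with integer shape,
`P` is `Gamma (m_P, Ψ)` with density `fP`, and `Υ` is `α`-`μ` distributed with density `fΥ`. -/
theorem cdf_end_to_end_harvested_case {Θ : Type*} [MeasureSpace Θ]
    [IsProbabilityMeasure (ℙ : Measure Θ)]
    (m₁ : ℕ) (hm₁ : 0 < m₁) (mP lam Ψ C z α₂ μ₂ Υb : ℝ)
    (hmP : 0 < mP) (hlam : 0 < lam) (hΨ : 0 < Ψ) (hC : 0 < C) (hz : 0 < z)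
    (hα₂ : 0 < α₂) (hμ₂ : 0 < μ₂) (hΥb : 0 < Υb)
    (γ₁ P Υ : Θ → ℝ) (hγ₁m : Measurable γ₁) (hPm : Measurable P) (hΥm : Measurable Υ)
    (hindep : iIndepFun ![γ₁, P, Υ] ℙ)
    (hγ₁ : Measure.map γ₁ ℙ = volume.withDensity fun x => ENNReal.ofReal
      (if 0 < x then lam ^ m₁ * x ^ (m₁ - 1) * Real.exp (-lam * x) / Real.Gamma (m₁ : ℝ)
       else 0))
    (fP : ℝ → ℝ)
    (hfP : ∀ t : ℝ, fP t = if 0 < t then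
        Ψ ^ mP * t ^ (mP - 1) * Real.exp (-Ψ * t) / Real.Gamma mP else 0)
    (hP : Measure.map P ℙ = volume.withDensity fun t => ENNReal.ofReal (fP t))
    (fΥ : ℝ → ℝ)
    (hfΥ : ∀ u : ℝ, fΥ u = if 0 < u then
        α₂ * μ₂ ^ μ₂ / (2 * Real.Gamma μ₂ * Υb) * (u / Υb) ^ (α₂ * μ₂ / 2 - 1)
          * Real.exp (-μ₂ * (u / Υb) ^ (α₂ / 2)) else 0)
    (hΥ : Measure.map Υ ℙ = volume.withDensity fun u => ENNReal.ofReal (fΥ u)) :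
    (ℙ {ω | γ₁ ω * (P ω * Υ ω) / (P ω * Υ ω + C) ≤ z}).toReal
      = 1 - Real.exp (-lam * z) * ∑ n ∈ Finset.range m₁, (1 / (n.factorial : ℝ)) *
          ∑ p ∈ Finset.range (n + 1),
            (n.choose p : ℝ) * (lam * z) ^ (n - p) * (lam * C * z) ^ p *
              ∫ u in Set.Ioi (0 : ℝ), ∫ t in Set.Ioi (0 : ℝ),
                (t * u) ^ (-(p : ℝ)) * Real.exp (-(lam * C * z) / (t * u)) * fP t * fΥ u := by
  have hfP' := IsDensityOnIoi.of_eq_ite hfP (by fun_prop) fun t ht => by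
    have := Gamma_pos_of_pos hmP; positivity
  have hfΥ' := IsDensityOnIoi.of_eq_ite hfΥ (by fun_prop) fun u hu => by
    have := Gamma_pos_of_pos hμ₂; positivity
  have hPΥ_pos : ∀ᵐ ω, 0 < P ω * Υ ω := by
    filter_upwards [hfP'.ae_pos_of_map_eq hPm hP, hfΥ'.ae_pos_of_map_eq hΥm hΥ] with ω hPω hΥω
    exact mul_pos hPω hΥω
  have hPΥ_γ₁ : IndepFun (P * Υ) γ₁ := by
    simpa using hindep.indepFun_mul_left (fun i => by fin_cases i <;> assumption) 1 2 0
      (by decide) (by decide)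
  have hPΥ : IndepFun P Υ := by simpa using hindep.indepFun (show (1 : Fin 3) ≠ 2 by decide)
  have hK_int (p : ℕ) :
      Integrable fun ω => (P ω * Υ ω) ^ (-(p : ℝ)) * exp (-(lam * C * z) / (P ω * Υ ω)) :=
    integrable_rpow_neg_natCast_mul_exp_neg_div (by fun_prop) hPΥ_pos (by positivity) p
  calc (ℙ {ω | γ₁ ω * (P ω * Υ ω) / (P ω * Υ ω + C) ≤ z}).toReal
      = ∫ ω, (Measure.map γ₁ ℙ).real (Set.Iic (z + C * z / (P ω * Υ ω))) :=
        hPΥ_γ₁.measureReal_mul_div_add_le (X := fun ω => P ω * Υ ω) (by fun_prop) hγ₁m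
          hPΥ_pos hC.le z
    _ = ∫ ω, 1 - exp (-lam * z) * ∑ n ∈ range m₁, 1 / (n ! : ℝ) * ∑ p ∈ range (n + 1),
          (n.choose p : ℝ) * (lam * z) ^ (n - p) * (lam * C * z) ^ p *
            ((P ω * Υ ω) ^ (-(p : ℝ)) * exp (-(lam * C * z) / (P ω * Υ ω))) := by
        refine integral_congr_ae ?_
        filter_upwards [hPΥ_pos] with ω hω
        rw [hγ₁, gamma_measureReal_Iic hlam.le hm₁ (by positivity),
          exp_mul_sum_pow_div_factorial_add_div _ _ _ _ hω]
    _ = _ := by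
        have hmoment (p : ℕ) :
            ∫ ω, (P ω * Υ ω) ^ (-(p : ℝ)) * exp (-(lam * C * z) / (P ω * Υ ω))
              = ∫ u in Set.Ioi 0, ∫ t in Set.Ioi 0,
                  (t * u) ^ (-(p : ℝ)) * exp (-(lam * C * z) / (t * u)) * fP t * fΥ u :=
          hPΥ.integral_comp_mul_eq hPm hΥm hfP' hP hfΥ' hΥ
            (h := fun x => x ^ (-(p : ℝ)) * exp (-(lam * C * z) / x)) (by fun_prop) (hK_int p)
        rw [integral_const_sub_mul_sum_mul_sum hK_int]
        simp only [hmoment]
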